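/- If a forward complete control system Σ=(X,𝒰,φ) has the uniform asymptotic gain (UAG) property and is uniformly globally stable (UGS), then Σ is ISS. -/

import Mathlib

open Set Filter

/-- Class `K`: continuous, strictly increasing on `[0,∞)` and vanishing at `0`. -/
def ClassK (γ : ℝ → ℝ) : Prop :=
  ContinuousOn γ (Ici 0) ∧ StrictMonoOn γ (Ici 0) ∧ γ 0 = 0

/-- Class `K∞`: class `K` and unbounded. -/
def ClassKinf (γ : ℝ → ℝ) : Prop :=
  ClassK γ ∧ ∀ c : ℝ, ∃ r : ℝ, 0 ≤ r ∧ c ≤ γ r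

/-- The class `K∞ ∪ {0}`. -/
def ClassKinf0 (γ : ℝ → ℝ) : Prop :=
  ClassKinf γ ∨ ∀ r : ℝ, 0 ≤ r → γ r = 0

/-- The class `K ∪ {0}`. -/
def ClassK0 (γ : ℝ → ℝ) : Prop :=
  ClassK γ ∨ ∀ r : ℝ, 0 ≤ r → γ r = 0

/-- Class `L`: continuous, strictly decreasing on `[0,∞)` with limit `0` at infinity. -/
def ClassL (γ : ℝ → ℝ) : Prop :=
  ContinuousOn γ (Ici 0) ∧ StrictAntiOn γ (Ici 0) ∧ Tendsto γ atTop (nhds 0)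

/-- Class `KL`. -/
def ClassKL (β : ℝ → ℝ → ℝ) : Prop :=
  ContinuousOn (fun p : ℝ × ℝ => β p.1 p.2) ((Ici 0) ×ˢ (Ici 0)) ∧
  (∀ t : ℝ, 0 ≤ t → ClassK (fun r => β r t)) ∧
  ∀ r : ℝ, 0 < r → StrictAntiOn (β r) (Ici 0) ∧ Tendsto (β r) atTop (nhds 0)

/-- A forward complete control system `Σ = (X, 𝒰, φ)`: inputs are functions
`u : ℝ₊ → U` (modelled as functions on `ℝ`, with only `t ≥ 0` relevant);
the set `inputs` of admissible inputs carries a norm `Unorm`, is shift invariant and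
closed under concatenation; the transition map `phi` satisfies the identity property,
causality, continuity in time and the cocycle property. -/
structure ControlSystem (X U : Type*) [NormedAddCommGroup X] [NormedSpace ℝ X] [Zero U] where
  /-- the set of admissible input functions -/
  inputs : Set (ℝ → U)
  /-- the norm of the input space -/
  Unorm : (ℝ → U) → ℝ
  Unorm_nonneg : ∀ u, 0 ≤ Unorm u
  /-- the zero input is admissible -/
  zero_mem : (fun _ : ℝ => (0 : U)) ∈ inputs
  Unorm_zero : Unorm (fun _ : ℝ => (0 : U)) = 0
  /-- the transition map `φ(t,x,u)` -/
  phi : ℝ → X → (ℝ → U) → X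
  /-- axiom of shift invariance -/
  shift_mem : ∀ u ∈ inputs, ∀ τ : ℝ, 0 ≤ τ → (fun s => u (s + τ)) ∈ inputs
  shift_norm : ∀ u ∈ inputs, ∀ τ : ℝ, 0 ≤ τ → Unorm (fun s => u (s + τ)) ≤ Unorm u
  /-- axiom of concatenation -/
  concat_mem : ∀ u₁ ∈ inputs, ∀ u₂ ∈ inputs, ∀ t : ℝ, 0 < t →
    (fun s => if s ≤ t then u₁ s else u₂ (s - t)) ∈ inputs
  /-- identity property -/
  identity : ∀ x u, phi 0 x u = x
  /-- causality -/
  causality : ∀ t : ℝ, 0 ≤ t → ∀ x : X, ∀ u ∈ inputs, ∀ v ∈ inputs,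
    (∀ s ∈ Icc (0:ℝ) t, u s = v s) → phi t x u = phi t x v
  /-- continuity of trajectories -/
  cont : ∀ x : X, ∀ u ∈ inputs, ContinuousOn (fun t => phi t x u) (Ici 0)
  /-- cocycle property -/
  cocycle : ∀ t : ℝ, 0 ≤ t → ∀ h : ℝ, 0 ≤ h → ∀ x : X, ∀ u ∈ inputs,
    phi h (phi t x u) (fun s => u (s + t)) = phi (t + h) x u

namespace ControlSystem

variable {X U : Type*} [NormedAddCommGroup X] [NormedSpace ℝ X] [Zero U]

/-- the zero input -/
def zeroIn : ℝ → U := fun _ => 0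

/-- Input-to-state stability. -/
def ISS (S : ControlSystem X U) : Prop :=
  ∃ β γ, ClassKL β ∧ ClassK γ ∧
    ∀ x : X, ∀ u ∈ S.inputs, ∀ t : ℝ, 0 ≤ t →
      ‖S.phi t x u‖ ≤ β ‖x‖ t + γ (S.Unorm u)

/-- Uniform asymptotic gain property. -/
def UAG (S : ControlSystem X U) : Prop :=
  ∃ γ, ClassKinf0 γ ∧
    ∀ ε : ℝ, 0 < ε → ∀ r : ℝ, 0 < r → ∃ τ : ℝ, 0 ≤ τ ∧
      ∀ u ∈ S.inputs, ∀ x : X, ‖x‖ < r → ∀ t : ℝ, τ ≤ t →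
        ‖S.phi t x u‖ ≤ ε + γ (S.Unorm u)

/-- Uniform global stability. -/
def UGS (S : ControlSystem X U) : Prop :=
  ∃ σ γ, ClassKinf σ ∧ ClassKinf0 γ ∧
    ∀ t : ℝ, 0 ≤ t → ∀ x : X, ∀ u ∈ S.inputs,
      ‖S.phi t x u‖ ≤ σ ‖x‖ + γ (S.Unorm u)

end ControlSystem

/-!
For `‖x‖ ≤ r` and `s ≥ t`, the excess `‖φ(s,x,u)‖ - γ(‖u‖)` over a gain `γ` dominating both
given gains is at most `σ(r)` by UGS, and at most `ε` once `t ≥ τ(ε, r)` by UAG. Its supremum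
`ψ(r,t)` is therefore nondecreasing in `r`, nonincreasing in `t`, bounded by `σ(r)` and tends to
`0`. Averaging `ψ` over unit windows, first in `t` and then in `r`, keeps these properties and
makes it continuous; `min (·) (σ r) + r e^{-t}` is then a `KL` function above `ψ`.
-/

open Topology

section ComparisonFunctions

variable {g : ℝ → ℝ}

theorem ClassK.monotoneOn (hg : ClassK g) : MonotoneOn g (Ici 0) :=
  hg.2.1.monotoneOn

theorem ClassK.nonneg (hg : ClassK g) {s : ℝ} (hs : 0 ≤ s) : 0 ≤ g s :=
  hg.2.2 ▸ hg.monotoneOn self_mem_Ici hs hs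

theorem ClassKinf0.monotoneOn (hg : ClassKinf0 g) : MonotoneOn g (Ici 0) := by
  rcases hg with hK | hzero
  · exact hK.1.monotoneOn
  · intro a ha b hb _
    rw [hzero a ha, hzero b hb]

theorem ClassKinf0.continuousOn (hg : ClassKinf0 g) : ContinuousOn g (Ici 0) := by
  rcases hg with hK | hzero
  · exact hK.1.1
  · exact continuousOn_const.congr fun s hs => hzero s hs

theorem ClassKinf0.map_zero (hg : ClassKinf0 g) : g 0 = 0 := by
  rcases hg with hK | hzero
  · exact hK.1.2.2
  · exact hzero 0 le_rfl

theorem ClassKinf0.nonneg (hg : ClassKinf0 g) {s : ℝ} (hs : 0 ≤ s) : 0 ≤ g s :=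
  hg.map_zero ▸ hg.monotoneOn self_mem_Ici hs hs

theorem classK_add_id (hc : ContinuousOn g (Ici 0)) (hm : MonotoneOn g (Ici 0)) (h0 : g 0 = 0) :
    ClassK fun s => g s + s :=
  ⟨hc.add continuousOn_id, fun _ ha _ hb hab => add_lt_add_of_le_of_lt (hm ha hb hab.le) hab,
    by simp [h0]⟩

end ComparisonFunctions

section WindowMean

open MeasureTheory intervalIntegral

noncomputable def windowMean (f : ℝ → ℝ) (u : ℝ) : ℝ :=
  ∫ x in u..u + 1, f x

variable {f g : ℝ → ℝ}

theorem windowMean_mono {u : ℝ} (hf : IntervalIntegrable f volume u (u + 1))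
    (hg : IntervalIntegrable g volume u (u + 1)) (h : ∀ x, f x ≤ g x) :
    windowMean f u ≤ windowMean g u :=
  integral_mono_on (by linarith) hf hg fun x _ => h x

theorem windowMean_neg (u : ℝ) : windowMean (fun x => -f x) u = -windowMean f u :=
  integral_neg

theorem Monotone.le_windowMean (hf : Monotone f) (u : ℝ) : f u ≤ windowMean f u :=
  calc f u = ∫ _ in u..u + 1, f u := by simp
    _ ≤ windowMean f u :=
      integral_mono_on (by linarith) intervalIntegrable_const hf.intervalIntegrable
        fun _ hx => hf hx.1

theorem Monotone.windowMean_le (hf : Monotone f) (u : ℝ) : windowMean f u ≤ f (u + 1) :=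
  calc windowMean f u ≤ ∫ _ in u..u + 1, f (u + 1) :=
      integral_mono_on (by linarith) hf.intervalIntegrable intervalIntegrable_const
        fun _ hx => hf hx.2
    _ = f (u + 1) := by simp

theorem Monotone.windowMean (hf : Monotone f) : Monotone (windowMean f) := by
  intro u v huv
  have hshift : _root_.windowMean f v = ∫ x in u..u + 1, f (x + (v - u)) := by
    rw [integral_comp_add_right, _root_.windowMean]
    congr 1 <;> ring
  rw [hshift]
  exact integral_mono_on (by linarith) hf.intervalIntegrable
    (hf.comp fun _ _ h => add_le_add_left h (v - u)).intervalIntegrable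
    fun x _ => hf (by linarith)

theorem Antitone.windowMean_le (hf : Antitone f) (u : ℝ) : windowMean f u ≤ f u := by
  simpa [windowMean_neg] using hf.neg.le_windowMean u

theorem Antitone.le_windowMean (hf : Antitone f) (u : ℝ) : f (u + 1) ≤ windowMean f u := by
  simpa [windowMean_neg] using hf.neg.windowMean_le u

theorem Antitone.windowMean (hf : Antitone f) : Antitone (windowMean f) := fun u v huv => by
  simpa [windowMean_neg] using hf.neg.windowMean huv

theorem abs_windowMean_sub_le (hf : ∀ a b, IntervalIntegrable f volume a b) {M c u v : ℝ}
    (hM : ∀ x ≤ c, |f x| ≤ M) (hu : u + 1 ≤ c) (hv : v + 1 ≤ c) :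
    |windowMean f u - windowMean f v| ≤ 2 * M * |u - v| := by
  have hpiece : ∀ a b, a ≤ c → b ≤ c → |∫ x in a..b, f x| ≤ M * |b - a| := fun a b ha hb => by
    simpa only [Real.norm_eq_abs] using
      norm_integral_le_of_norm_le_const (f := f) fun x hx => hM x (hx.2.trans (max_le ha hb))
  rw [windowMean, windowMean, integral_interval_sub_interval_comm (hf _ _) (hf _ _) (hf _ _)]
  calc _ ≤ |∫ x in u..v, f x| + |∫ x in u + 1..v + 1, f x| := abs_sub _ _
    _ ≤ M * |v - u| + M * |v + 1 - (u + 1)| :=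
      add_le_add (hpiece _ _ (by linarith) (by linarith)) (hpiece _ _ hu hv)
    _ = 2 * M * |u - v| := by rw [add_sub_add_right_eq_sub, abs_sub_comm v u]; ring

end WindowMean

section KLMajorant

open MeasureTheory

noncomputable def windowSmoothing (ψ : ℝ → ℝ → ℝ) (r t : ℝ) : ℝ :=
  windowMean (fun a => windowMean (ψ a) (t - 1)) r

variable {ψ : ℝ → ℝ → ℝ} (hmono : ∀ t, Monotone (ψ · t)) (hanti : ∀ r, Antitone (ψ r))
include hmono hanti

theorem monotone_windowMean_sub_one (t : ℝ) :
    Monotone fun a => windowMean (ψ a) (t - 1) := fun _ _ hab =>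
  windowMean_mono (hanti _).intervalIntegrable (hanti _).intervalIntegrable fun s => hmono s hab

theorem le_windowSmoothing (r t : ℝ) : ψ r t ≤ windowSmoothing ψ r t :=
  calc ψ r t ≤ windowMean (ψ r) (t - 1) := by simpa using (hanti r).le_windowMean (t - 1)
    _ ≤ windowSmoothing ψ r t := (monotone_windowMean_sub_one hmono hanti t).le_windowMean r

theorem windowSmoothing_le (r t : ℝ) : windowSmoothing ψ r t ≤ ψ (r + 1) (t - 1) :=
  ((monotone_windowMean_sub_one hmono hanti t).windowMean_le r).trans
    ((hanti _).windowMean_le _)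

theorem monotone_windowSmoothing (t : ℝ) : Monotone (windowSmoothing ψ · t) :=
  (monotone_windowMean_sub_one hmono hanti t).windowMean

theorem antitone_windowSmoothing (r : ℝ) : Antitone (windowSmoothing ψ r) := fun _ _ hst =>
  windowMean_mono (monotone_windowMean_sub_one hmono hanti _).intervalIntegrable
    (monotone_windowMean_sub_one hmono hanti _).intervalIntegrable
    fun a => (hanti a).windowMean (by linarith)

theorem abs_windowSmoothing_sub_le (hnn : ∀ r t, 0 ≤ ψ r t) {M r₀ t₀ : ℝ}
    (hM : ∀ t, ψ (r₀ + 2) t ≤ M) {r t : ℝ} (hr : |r - r₀| ≤ 1) :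
    |windowSmoothing ψ r t - windowSmoothing ψ r₀ t₀| ≤ 2 * M * (|r - r₀| + |t - t₀|) := by
  have hψ : ∀ a ≤ r₀ + 2, ∀ s, |ψ a s| ≤ M := fun a ha s => by
    rw [abs_of_nonneg (hnn a s)]
    exact (hmono s ha).trans (hM s)
  have hinner : ∀ a ≤ r₀ + 2, ∀ s,
      |windowMean (ψ a) (t - 1) - windowMean (ψ a) (s - 1)| ≤ 2 * M * |t - s| := by
    intro a ha s
    have := abs_windowMean_sub_le (fun _ _ => (hanti a).intervalIntegrable) (M := M)
      (c := max t s) (u := t - 1) (v := s - 1) (fun x _ => hψ a ha x) (by simp) (by simp)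
    rwa [sub_sub_sub_cancel_right] at this
  have hstep_r : |windowSmoothing ψ r t - windowSmoothing ψ r₀ t| ≤ 2 * M * |r - r₀| := by
    refine abs_windowMean_sub_le
      (fun _ _ => (monotone_windowMean_sub_one hmono hanti t).intervalIntegrable) (c := r₀ + 2)
      (fun a ha => ?_) (by linarith [(abs_le.1 hr).2]) (by linarith)
    rw [abs_of_nonneg ((hnn a _).trans ((hanti a).le_windowMean _))]
    exact ((hanti a).windowMean_le _).trans ((hψ a ha _).trans' (le_abs_self _))
  have hstep_t : |windowSmoothing ψ r₀ t - windowSmoothing ψ r₀ t₀| ≤ 2 * M * |t - t₀| := by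
    rw [windowSmoothing, windowSmoothing, windowMean, windowMean,
      ← intervalIntegral.integral_sub
        (monotone_windowMean_sub_one hmono hanti t).intervalIntegrable
        (monotone_windowMean_sub_one hmono hanti t₀).intervalIntegrable]
    simpa using intervalIntegral.norm_integral_le_of_norm_le_const (a := r₀) (b := r₀ + 1)
      (f := fun a => windowMean (ψ a) (t - 1) - windowMean (ψ a) (t₀ - 1))
      fun a ha => hinner a (ha.2.trans (max_le (by linarith) (by linarith))) t₀
  calc _ ≤ |windowSmoothing ψ r t - windowSmoothing ψ r₀ t| +
        |windowSmoothing ψ r₀ t - windowSmoothing ψ r₀ t₀| := abs_sub_le _ _ _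
    _ ≤ _ := by linarith

theorem continuous_windowSmoothing (hnn : ∀ r t, 0 ≤ ψ r t)
    (hbdd : ∀ r, BddAbove (range (ψ r))) : Continuous (Function.uncurry (windowSmoothing ψ)) := by
  refine continuous_iff_continuousAt.2 fun ⟨r₀, t₀⟩ => ?_
  obtain ⟨M, hM⟩ := hbdd (r₀ + 2)
  have hlim :
      Tendsto (fun p : ℝ × ℝ => 2 * M * (|p.1 - r₀| + |p.2 - t₀|)) (𝓝 (r₀, t₀)) (𝓝 0) := by
    have : Continuous fun p : ℝ × ℝ => 2 * M * (|p.1 - r₀| + |p.2 - t₀|) := by fun_prop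
    simpa using this.tendsto (r₀, t₀)
  have hnear : ∀ᶠ p : ℝ × ℝ in 𝓝 (r₀, t₀), |p.1 - r₀| ≤ 1 := by
    have : Continuous fun p : ℝ × ℝ => |p.1 - r₀| := by fun_prop
    exact this.tendsto (r₀, t₀) |>.eventually (ge_mem_nhds (show |(r₀, t₀).1 - r₀| < 1 by simp))
  refine tendsto_iff_norm_sub_tendsto_zero.2
    (squeeze_zero' (Eventually.of_forall fun _ => norm_nonneg _) ?_ hlim)
  filter_upwards [hnear] with p hp
  exact abs_windowSmoothing_sub_le hmono hanti hnn (fun t => hM ⟨t, rfl⟩) hp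

theorem exists_classKL_ge {σ : ℝ → ℝ} (hσ : ClassK σ) (hnn : ∀ r t, 0 ≤ ψ r t)
    (hle : ∀ r t, 0 ≤ r → ψ r t ≤ σ r) (hlim : ∀ r, Tendsto (ψ r) atTop (𝓝 0)) :
    ∃ β, ClassKL β ∧ ∀ r t, 0 ≤ r → 0 ≤ t → ψ r t ≤ β r t := by
  set ζ := windowSmoothing ψ
  have hζψ : ∀ r t, ψ r t ≤ ζ r t := le_windowSmoothing hmono hanti
  have hζ : Continuous (Function.uncurry ζ) :=
    continuous_windowSmoothing hmono hanti hnn fun r =>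
      ⟨σ (max r 0), by
        rintro _ ⟨t, rfl⟩
        exact (hmono t (le_max_left r 0)).trans (hle _ t (le_max_right r 0))⟩
  -- `min · (σ r)` brings the value at `r = 0` down to `0`; `r e^{-t}` makes both
  -- monotonicities strict.
  refine ⟨fun r t => min (ζ r t) (σ r) + r * Real.exp (-t), ⟨?_, fun t _ => ⟨?_, ?_, ?_⟩,
    fun r hr => ⟨?_, ?_⟩⟩, fun r t hr _ => ?_⟩
  · exact (ContinuousOn.inf hζ.continuousOn (hσ.1.comp continuousOn_fst fun p hp => hp.1)).add
      (by fun_prop)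
  · exact (ContinuousOn.inf
      (hζ.comp (continuous_id.prodMk continuous_const)).continuousOn hσ.1).add (by fun_prop)
  · intro a ha b hb hab
    exact add_lt_add_of_le_of_lt
      (min_le_min (monotone_windowSmoothing hmono hanti t hab.le) (hσ.monotoneOn ha hb hab.le))
      (mul_lt_mul_of_pos_right hab (Real.exp_pos _))
  · simp [hσ.2.2, (hnn 0 t).trans (hζψ 0 t)]
  · intro a _ b _ hab
    exact add_lt_add_of_le_of_lt
      (min_le_min_right _ (antitone_windowSmoothing hmono hanti r hab.le))
      (mul_lt_mul_of_pos_left (Real.exp_lt_exp.2 (neg_lt_neg hab)) hr)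
  · have hmin : Tendsto (fun t => min (ζ r t) (σ r)) atTop (𝓝 0) := by
      refine squeeze_zero (fun t => le_min ((hnn r t).trans (hζψ r t)) (hσ.nonneg hr.le))
        (fun t => (min_le_left _ _).trans (windowSmoothing_le hmono hanti r t)) ?_
      exact (hlim (r + 1)).comp (tendsto_atTop_add_const_right _ (-1) tendsto_id)
    simpa using hmin.add (Real.tendsto_exp_neg_atTop_nhds_zero.const_mul r)
  · exact (le_min (hζψ r t) (hle r t hr)).trans
      (le_add_of_nonneg_right (mul_nonneg hr (Real.exp_pos _).le))

end KLMajorant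

namespace ControlSystem

variable {X U : Type*} [NormedAddCommGroup X] [NormedSpace ℝ X] [Zero U]

/-- `0` is included so that the supremum `excess` is nonnegative, also when no `x` has
`‖x‖ ≤ r`. -/
def excessSet (S : ControlSystem X U) (γ : ℝ → ℝ) (r t : ℝ) : Set ℝ :=
  insert 0 {v | ∃ x : X, ‖x‖ ≤ r ∧ ∃ u ∈ S.inputs, ∃ s, 0 ≤ s ∧ t ≤ s ∧
    v = ‖S.phi s x u‖ - γ (S.Unorm u)}

noncomputable def excess (S : ControlSystem X U) (γ : ℝ → ℝ) (r t : ℝ) : ℝ :=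
  sSup (S.excessSet γ r t)

variable (S : ControlSystem X U) {γ σ : ℝ → ℝ}

theorem excessSet_subset {r r' t t' : ℝ} (hr : r ≤ r') (ht : t' ≤ t) :
    S.excessSet γ r t ⊆ S.excessSet γ r' t' := by
  rintro v (rfl | ⟨x, hx, u, hu, s, hs, hts, rfl⟩)
  · exact mem_insert _ _
  · exact Or.inr ⟨x, hx.trans hr, u, hu, s, hs, ht.trans hts, rfl⟩

theorem mem_upperBounds_excessSet {r t M : ℝ} (hM : 0 ≤ M)
    (h : ∀ x : X, ‖x‖ ≤ r → ∀ u ∈ S.inputs, ∀ s, 0 ≤ s → t ≤ s →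
      ‖S.phi s x u‖ ≤ M + γ (S.Unorm u)) :
    M ∈ upperBounds (S.excessSet γ r t) := by
  rintro v (rfl | ⟨x, hx, u, hu, s, hs, hts, rfl⟩)
  · exact hM
  · linarith [h x hx u hu s hs hts]

theorem gain_mem_upperBounds_excessSet (hσ : ClassK σ)
    (hUGS : ∀ t, 0 ≤ t → ∀ x : X, ∀ u ∈ S.inputs, ‖S.phi t x u‖ ≤ σ ‖x‖ + γ (S.Unorm u))
    {r : ℝ} (hr : 0 ≤ r) (t : ℝ) :
    σ r ∈ upperBounds (S.excessSet γ r t) :=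
  S.mem_upperBounds_excessSet (hσ.nonneg hr) fun x hx u hu s hs _ =>
    (hUGS s hs x u hu).trans (by gcongr; exact hσ.monotoneOn (norm_nonneg x) hr hx)

section Bounded

variable {S} (hbdd : ∀ r t, BddAbove (S.excessSet γ r t))
include hbdd

theorem excess_nonneg (r t : ℝ) : 0 ≤ S.excess γ r t :=
  le_csSup (hbdd r t) (mem_insert _ _)

theorem monotone_excess (t : ℝ) : Monotone (S.excess γ · t) := fun _ r' hr =>
  csSup_le_csSup (hbdd r' t) ⟨0, mem_insert _ _⟩ (S.excessSet_subset hr le_rfl)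

theorem antitone_excess (r : ℝ) : Antitone (S.excess γ r) := fun t _ ht =>
  csSup_le_csSup (hbdd r t) ⟨0, mem_insert _ _⟩ (S.excessSet_subset le_rfl ht)

theorem norm_phi_le_excess {x : X} {u : ℝ → U} (hu : u ∈ S.inputs) {t : ℝ} (ht : 0 ≤ t) :
    ‖S.phi t x u‖ ≤ S.excess γ ‖x‖ t + γ (S.Unorm u) := by
  have : ‖S.phi t x u‖ - γ (S.Unorm u) ≤ S.excess γ ‖x‖ t :=
    le_csSup (hbdd _ _) (Or.inr ⟨x, le_rfl, u, hu, t, ht, le_rfl, rfl⟩)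
  linarith

theorem tendsto_excess
    (hUAG : ∀ ε, 0 < ε → ∀ r, 0 < r → ∃ τ, ∀ u ∈ S.inputs, ∀ x : X, ‖x‖ < r → ∀ t, τ ≤ t →
      ‖S.phi t x u‖ ≤ ε + γ (S.Unorm u))
    (r : ℝ) : Tendsto (S.excess γ r) atTop (𝓝 0) := by
  refine tendsto_order.2 ⟨fun a ha => Eventually.of_forall fun t =>
    ha.trans_le (excess_nonneg hbdd r t), fun b hb => ?_⟩
  obtain ⟨τ, hτ⟩ := hUAG (b / 2) (by positivity) (max r 0 + 1) (by positivity)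
  filter_upwards [eventually_ge_atTop τ] with t ht
  refine (csSup_le ⟨0, mem_insert _ _⟩ (S.mem_upperBounds_excessSet (by positivity)
    fun x hx u hu s _ hts => hτ u hu x ?_ s (ht.trans hts))).trans_lt (half_lt_self hb)
  linarith [le_max_left r 0]

end Bounded

theorem iss_of_gain_estimates (hσ : ClassK σ) (hγ : ClassK γ)
    (hUGS : ∀ t, 0 ≤ t → ∀ x : X, ∀ u ∈ S.inputs, ‖S.phi t x u‖ ≤ σ ‖x‖ + γ (S.Unorm u))
    (hUAG : ∀ ε, 0 < ε → ∀ r, 0 < r → ∃ τ, ∀ u ∈ S.inputs, ∀ x : X, ‖x‖ < r → ∀ t, τ ≤ t →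
      ‖S.phi t x u‖ ≤ ε + γ (S.Unorm u)) :
    S.ISS := by
  have hbdd : ∀ r t, BddAbove (S.excessSet γ r t) := fun r t =>
    ⟨σ (max r 0), fun _ hv => S.gain_mem_upperBounds_excessSet hσ hUGS (le_max_right r 0) t
      (S.excessSet_subset (le_max_left r 0) le_rfl hv)⟩
  obtain ⟨β, hβ, hψβ⟩ := exists_classKL_ge (monotone_excess hbdd) (antitone_excess hbdd) hσ
    (excess_nonneg hbdd)
    (fun r t hr => csSup_le ⟨0, mem_insert _ _⟩ (S.gain_mem_upperBounds_excessSet hσ hUGS hr t))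
    (tendsto_excess hbdd hUAG)
  exact ⟨β, γ, hβ, hγ, fun x u hu t ht =>
    (norm_phi_le_excess hbdd hu ht).trans (by gcongr; exact hψβ _ _ (norm_nonneg x) ht)⟩

/-- If a forward complete control system is UAG and UGS, then it is ISS. -/
theorem UAG.UGS.toISS (S : ControlSystem X U) (h1 : S.UAG) (h2 : S.UGS) : S.ISS := by
  obtain ⟨g₁, hg₁, hUAG⟩ := h1
  obtain ⟨σ, g₂, hσ, hg₂, hUGS⟩ := h2
  set γ : ℝ → ℝ := fun s => (g₁ s + g₂ s) + s
  have hγ : ClassK γ := classK_add_id (hg₁.continuousOn.add hg₂.continuousOn)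
    (hg₁.monotoneOn.add hg₂.monotoneOn) (by simp [hg₁.map_zero, hg₂.map_zero])
  have hg₁γ : ∀ u, g₁ (S.Unorm u) ≤ γ (S.Unorm u) := fun u => by
    linarith [hg₂.nonneg (S.Unorm_nonneg u), S.Unorm_nonneg u]
  have hg₂γ : ∀ u, g₂ (S.Unorm u) ≤ γ (S.Unorm u) := fun u => by
    linarith [hg₁.nonneg (S.Unorm_nonneg u), S.Unorm_nonneg u]
  refine S.iss_of_gain_estimates hσ.1 hγ
    (fun t ht x u hu => (hUGS t ht x u hu).trans (by gcongr; exact hg₂γ u))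
    fun ε hε r hr => ?_
  obtain ⟨τ, -, hτ⟩ := hUAG ε hε r hr
  exact ⟨τ, fun u hu x hx t ht => (hτ u hu x hx t ht).trans (by gcongr; exact hg₁γ u)⟩

end ControlSystem
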